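/- The set C = {ab} ∪ {a bⁿ a bⁿ⁺¹ : n ≥ 1} over the alphabet {a,b} is a circular code. -/

import Mathlib

/-!
A word beginning with `a` factors uniquely as `a bⁿ¹ a bⁿ² ⋯ a bⁿᵏ`, so the words of `C*` are
exactly the encodings of the exponent sequences that can be cut into the tiles `(1)` and
`(n, n + 1)` with `n ≥ 1`. A tile is determined by its last entry, so `C` is a suffix code.

For circularity, suppose `EF` and `FE` are tileable but `E` or `F` is not. Then some pair
`(m, m + 1)` straddles the cut of `EF` and some pair `(k, k + 1)` straddles the cut of `FE`.
Inside a tiling, an entry `c ≥ 2` at a tile boundary must be followed by `c + 1`; since `F` is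
tileable both after dropping its first and after dropping its last entry, this forces
`F = m + 1, m + 2, …, k`, and likewise `E = k + 1, …, m`, whence `k > m > k`.
-/

inductive AB : Type | a | b
deriving DecidableEq

open AB

def InStar (C : Set (List AB)) (w : List AB) : Prop :=
  ∃ l : List (List AB), (∀ u ∈ l, u ∈ C) ∧ l.flatten = w

def IsCode (C : Set (List AB)) : Prop :=
  ∀ l l' : List (List AB), (∀ u ∈ l, u ∈ C) → (∀ u ∈ l', u ∈ C) →
    l.flatten = l'.flatten → l = l'

def C : Set (List AB) :=
  {w | w = [a, b] ∨ ∃ n : ℕ, 1 ≤ n ∧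
    w = a :: (List.replicate n b ++ a :: List.replicate (n + 1) b)}

theorem List.flatten_inj_of_suffixFree {α : Type*} {S : Set (List α)} (hnil : [] ∉ S)
    (hS : ∀ w ∈ S, ∀ w' ∈ S, w <:+ w' → w = w') {l l' : List (List α)}
    (hl : ∀ u ∈ l, u ∈ S) (hl' : ∀ u ∈ l', u ∈ S) (h : l.flatten = l'.flatten) : l = l' := by
  induction l using List.reverseRecOn generalizing l' with
  | nil =>
    cases l' using List.reverseRecOn with
    | nil => rfl
    | append_singleton L' w' =>
      obtain ⟨-, hw'⟩ : (∀ u ∈ L', u = []) ∧ w' = [] := by simpa using h.symm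
      exact absurd (hw' ▸ hl' w' (by simp)) hnil
  | append_singleton L w ih =>
    cases l' using List.reverseRecOn with
    | nil =>
      obtain ⟨-, hw⟩ : (∀ u ∈ L, u = []) ∧ w = [] := by simpa using h
      exact absurd (hw ▸ hl w (by simp)) hnil
    | append_singleton L' w' =>
      simp only [List.flatten_append, List.flatten_singleton] at h
      have hw : w ∈ S := hl w (by simp)
      have hw' : w' ∈ S := hl' w' (by simp)
      have hww : w = w' := by
        rcases List.suffix_or_suffix_of_suffix (List.suffix_append L.flatten w)
            (h ▸ List.suffix_append L'.flatten w') with hs | hs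
        · exact hS w hw w' hw' hs
        · exact (hS w' hw' w hw hs).symm
      subst hww
      rw [ih (fun u hu => hl u (by simp [hu])) (fun u hu => hl' u (by simp [hu]))
        (List.append_cancel_right h)]

def toWord (l : List ℕ) : List AB := (l.map fun n => a :: List.replicate n b).flatten

@[simp] lemma toWord_nil : toWord [] = [] := rfl

@[simp] lemma toWord_cons (n : ℕ) (l : List ℕ) :
    toWord (n :: l) = a :: (List.replicate n b ++ toWord l) := rfl

@[simp] lemma toWord_append (x y : List ℕ) : toWord (x ++ y) = toWord x ++ toWord y := by
  simp [toWord]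

lemma toWord_eq_intercalate (l : List ℕ) :
    toWord l = [a].intercalate ([] :: l.map (List.replicate · b)) := by
  induction l with
  | nil => rfl
  | cons n l ih =>
    rw [toWord_cons, ih, List.map_cons, List.intercalate_cons_cons]
    cases l <;> simp [List.intercalate_cons_cons]

lemma toWord_injective : Function.Injective toWord := by
  intro l l' h
  have hsplit (l : List ℕ) : (toWord l).splitOn a = [] :: l.map (List.replicate · b) :=
    toWord_eq_intercalate l ▸ List.splitOn_intercalate a (by simp) (List.cons_ne_nil _ _)
  have := hsplit l ▸ hsplit l' ▸ congrArg (List.splitOn a) h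
  exact (List.map_injective_iff.mpr (List.replicate_left_injective b)) (List.cons_injective this)

lemma head?_toWord_ne (l : List ℕ) : (toWord l).head? ≠ some b := by
  cases l <;> simp

lemma replicate_append_eq_append {n : ℕ} {w u v : List AB} (hv : v.head? ≠ some b)
    (h : List.replicate n b ++ w = u ++ v) :
    ∃ u', u = List.replicate n b ++ u' ∧ w = u' ++ v := by
  rcases List.append_eq_append_iff.mp h with ⟨u', hu, hw⟩ | ⟨s, hs, hv'⟩
  · exact ⟨u', hu, hw⟩
  · cases s with
    | nil => exact ⟨[], by simpa using hs.symm, by simpa using hv'.symm⟩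
    | cons x s =>
      obtain ⟨-, -, hs'⟩ := List.append_eq_replicate_iff.mp hs.symm
      have hx : x = b := List.eq_of_mem_replicate (hs' ▸ List.mem_cons_self)
      simp [hv', hx] at hv

lemma toWord_eq_append {l : List ℕ} {u v : List AB} (hv : v.head? ≠ some b)
    (h : toWord l = u ++ v) : ∃ p q, l = p ++ q ∧ toWord p = u ∧ toWord q = v := by
  induction l generalizing u with
  | nil =>
    obtain ⟨rfl, rfl⟩ := List.append_eq_nil_iff.mp h.symm
    exact ⟨[], [], rfl, rfl, rfl⟩
  | cons n l ih =>
    cases u with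
    | nil => exact ⟨[], n :: l, rfl, rfl, h⟩
    | cons x u =>
      rw [toWord_cons, List.cons_append, List.cons_eq_cons] at h
      obtain ⟨rfl, h⟩ := h
      obtain ⟨u', rfl, hl⟩ := replicate_append_eq_append hv h
      obtain ⟨p, q, rfl, rfl, rfl⟩ := ih hl
      exact ⟨n :: p, q, rfl, rfl, rfl⟩

lemma toWord_rotate {l m : List ℕ} {u v : List AB} (hl : toWord l = u ++ v)
    (hm : toWord m = v ++ u) : ∃ p q, l = p ++ q ∧ m = q ++ p ∧ toWord p = u ∧ toWord q = v := by
  have hv : v.head? ≠ some b := by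
    intro hb
    apply head?_toWord_ne m
    rw [hm, List.head?_append, hb, Option.some_or]
  obtain ⟨p, q, rfl, rfl, rfl⟩ := toWord_eq_append hv hl
  exact ⟨p, q, rfl, toWord_injective (by rw [hm, toWord_append]), rfl, rfl⟩

inductive Tileable : List ℕ → Prop
  | nil : Tileable []
  | one {l : List ℕ} : Tileable l → Tileable (1 :: l)
  | pair {l : List ℕ} (n : ℕ) : 1 ≤ n → Tileable l → Tileable (n :: (n + 1) :: l)

namespace Tileable

lemma tail_of_two_le {c : ℕ} {l : List ℕ} (h : Tileable (c :: l)) (hc : 2 ≤ c) :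
    ∃ l', l = (c + 1) :: l' ∧ Tileable l' := by
  cases h with
  | one => omega
  | pair n hn h => exact ⟨_, rfl, h⟩

lemma eq_add_length_of_cons_eq_concat {x y : List ℕ} {c k : ℕ} (hx : Tileable x)
    (hy : Tileable y) (hc : 2 ≤ c) (h : c :: y = x ++ [k]) : k = c + y.length := by
  induction hx generalizing c y with
  | nil => simp_all
  | one => simp at h; omega
  | @pair l n _ _ ih =>
    simp only [List.cons_append, List.cons.injEq] at h
    obtain ⟨rfl, rfl⟩ := h
    obtain ⟨y', hy', hy''⟩ := hy.tail_of_two_le (by omega)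
    have := ih hy'' (by omega : 2 ≤ c + 2) (by simpa using hy'.symm)
    simp only [hy', List.length_cons]
    omega

lemma of_append {x y : List ℕ} (h : Tileable (x ++ y)) : (Tileable x ∧ Tileable y) ∨
    ∃ x' n y', x = x' ++ [n] ∧ y = (n + 1) :: y' ∧ 1 ≤ n ∧ Tileable x' ∧ Tileable y' := by
  generalize hw : x ++ y = w at h
  induction h generalizing x with
  | nil =>
    obtain ⟨rfl, rfl⟩ := List.append_eq_nil_iff.mp hw
    exact Or.inl ⟨nil, nil⟩
  | @one l hl ih =>
    rcases x with _ | ⟨_, x⟩ <;>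
      simp only [List.nil_append, List.cons_append, List.cons.injEq] at hw
    · exact Or.inl ⟨nil, hw ▸ one hl⟩
    obtain ⟨rfl, hw⟩ := hw
    rcases ih hw with ⟨h1, h2⟩ | ⟨x', n, y', rfl, rfl, hn, hx', hy'⟩
    · exact Or.inl ⟨one h1, h2⟩
    · exact Or.inr ⟨1 :: x', n, y', rfl, rfl, hn, one hx', hy'⟩
  | @pair l n hn hl ih =>
    rcases x with _ | ⟨_, _ | ⟨_, x⟩⟩ <;>
      simp only [List.nil_append, List.cons_append, List.cons.injEq] at hw
    · exact Or.inl ⟨nil, hw ▸ pair n hn hl⟩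
    · obtain ⟨rfl, rfl⟩ := hw
      exact Or.inr ⟨[], _, l, rfl, rfl, hn, nil, hl⟩
    obtain ⟨rfl, rfl, hw⟩ := hw
    rcases ih hw with ⟨h1, h2⟩ | ⟨x', m, y', rfl, rfl, hm, hx', hy'⟩
    · exact Or.inl ⟨pair _ hn h1, h2⟩
    · exact Or.inr ⟨_ :: _ :: x', m, y', rfl, rfl, hm, pair _ hn hx', hy'⟩

theorem of_append_of_append {x y : List ℕ} (hxy : Tileable (x ++ y)) (hyx : Tileable (y ++ x)) :
    Tileable x ∧ Tileable y := by
  rcases of_append hxy with hxy | ⟨x', m, y', rfl, rfl, hm, hx', hy'⟩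
  · exact hxy
  rcases of_append hyx with hyx | ⟨y'', k, x'', hy, hx, hk, hy'', hx''⟩
  · exact hyx.symm
  have hk := eq_add_length_of_cons_eq_concat hy'' hy' (by omega) hy
  have hm := eq_add_length_of_cons_eq_concat hx' hx'' (by omega) hx.symm
  omega

end Tileable

def tiles : Set (List ℕ) := {t | t = [1] ∨ ∃ n, 1 ≤ n ∧ t = [n, n + 1]}

lemma C_eq_image_tiles : C = toWord '' tiles := by
  ext w
  simp only [C, tiles, Set.mem_image, Set.mem_ofPred_eq]
  constructor
  · rintro (rfl | ⟨n, hn, rfl⟩)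
    · exact ⟨[1], Or.inl rfl, rfl⟩
    · exact ⟨[n, n + 1], Or.inr ⟨n, hn, rfl⟩, by simp⟩
  · rintro ⟨t, rfl | ⟨n, hn, rfl⟩, rfl⟩
    · exact Or.inl rfl
    · exact Or.inr ⟨n, hn, by simp⟩

lemma tiles_suffixFree : ∀ t ∈ tiles, ∀ t' ∈ tiles, t <:+ t' → t = t' := by
  rintro t ht t' ht' h
  have hlast := h.getLast (by rcases ht with rfl | ⟨n, -, rfl⟩ <;> simp)
  rcases ht with rfl | ⟨n, hn, rfl⟩ <;> rcases ht' with rfl | ⟨m, hm, rfl⟩ <;>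
    simp only [List.getLast_singleton, List.getLast_cons_cons, Nat.add_right_cancel_iff] at hlast
  · rfl
  · omega
  · omega
  · rw [hlast]

lemma C_suffixFree : ∀ w ∈ C, ∀ w' ∈ C, w <:+ w' → w = w' := by
  rw [C_eq_image_tiles]
  rintro _ ⟨t, ht, rfl⟩ _ ⟨t', ht', rfl⟩ ⟨s, hs⟩
  obtain ⟨p, q, rfl, -, hq⟩ := toWord_eq_append (head?_toWord_ne t) hs.symm
  rw [toWord_injective hq] at ht' ⊢
  exact congrArg toWord (tiles_suffixFree t ht _ ht' (List.suffix_append p t))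

theorem isCode_C : IsCode C := fun _ _ =>
  List.flatten_inj_of_suffixFree (by simp [C]) C_suffixFree

lemma inStar_C_iff {w : List AB} : InStar C w ↔ ∃ l, Tileable l ∧ toWord l = w := by
  constructor
  · rintro ⟨ws, hws, rfl⟩
    induction ws with
    | nil => exact ⟨[], .nil, rfl⟩
    | cons w ws ih =>
      obtain ⟨l, hl, hlw⟩ := ih fun u hu => hws u (List.mem_cons_of_mem _ hu)
      rcases hws w List.mem_cons_self with rfl | ⟨n, hn, rfl⟩
      · exact ⟨1 :: l, hl.one, by simp [hlw]⟩
      · exact ⟨n :: (n + 1) :: l, hl.pair n hn, by simp [hlw]⟩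
  · rintro ⟨l, hl, rfl⟩
    induction hl with
    | nil => exact ⟨[], by simp, rfl⟩
    | one _ ih =>
      obtain ⟨ws, hws, hflat⟩ := ih
      exact ⟨[a, b] :: ws, by simpa [C] using hws, by simp [hflat]⟩
    | pair n hn _ ih =>
      obtain ⟨ws, hws, hflat⟩ := ih
      exact ⟨(a :: (List.replicate n b ++ a :: List.replicate (n + 1) b)) :: ws,
        List.forall_mem_cons.mpr ⟨Or.inr ⟨n, hn, rfl⟩, hws⟩, by simp [hflat]⟩

/-- `C = {ab} ∪ {a bⁿ a bⁿ⁺¹ : n ≥ 1}` is a circular code. -/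
theorem stmt1 :
    IsCode C ∧
    ∀ u v : List AB, InStar C (u ++ v) → InStar C (v ++ u) →
      InStar C u ∧ InStar C v := by
  refine ⟨isCode_C, fun u v huv hvu => ?_⟩
  obtain ⟨l, hl, hlw⟩ := inStar_C_iff.mp huv
  obtain ⟨m, hm, hmw⟩ := inStar_C_iff.mp hvu
  obtain ⟨p, q, rfl, rfl, rfl, rfl⟩ := toWord_rotate hlw hmw
  obtain ⟨hp, hq⟩ := Tileable.of_append_of_append hl hm
  exact ⟨inStar_C_iff.mpr ⟨p, hp, rfl⟩, inStar_C_iff.mpr ⟨q, hq, rfl⟩⟩
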